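/- arXiv:1701.00580 — 2 statements merged into one kernel-verified Lean document; each statement's English description precedes it below -/
import Mathlib

section
/- Let A and B be the sets of 3-element and 2-element subsets of {1,...,5} respectively. The group of permutations of the disjoint union A ⊔ B preserving the incidence relation (pairs (α,β) with α ∈ A, β ∈ B and α ⊇ β) has order 240, generated by the action of the symmetric group S₅ and the switch α ↔ ᾱ. -/
/-- The vertex set: 3-element and 2-element subsets of {1,...,5}. -/
abbrev HessVert := {s : Finset (Fin 5) // s.card = 3 ∨ s.card = 2}

/-- The incidence relation: x is incident to y iff one is strictly contained in the
other (for α ∈ A, β ∈ B this says β ⊂ α). -/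
def hessInc (x y : HessVert) : Prop := x.1 ⊂ y.1 ∨ y.1 ⊂ x.1

instance : DecidableRel hessInc := fun x y => by unfold hessInc; infer_instance

def hessN (x y : HessVert) : Prop := ∃ z, hessInc x z ∧ hessInc y z

instance : DecidableRel hessN := fun x y => by unfold hessN; infer_instance

lemma sameCard : ∀ x y : HessVert, hessN x y → x.1.card = y.1.card := by decide

lemma conn : ∀ x y : HessVert, x.1.card = y.1.card → ∃ z, hessN x z ∧ hessN z y := by decide

lemma pairs_inter : ∀ p q : HessVert, p.1.card = 2 → q.1.card = 2 →
    (hessN p q ↔ (p.1 ∩ q.1).Nonempty) := by decide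

set_option maxRecDepth 100000 in
set_option maxHeartbeats 2000000 in
set_option synthInstance.maxHeartbeats 2000000 in
set_option synthInstance.maxSize 2000 in
lemma clique4 : ∀ p q r s : {t : Finset (Fin 5) // t.card = 2},
    (p ≠ q ∧ p ≠ r ∧ p ≠ s ∧ q ≠ r ∧ q ≠ s ∧ r ≠ s) →
    ((p.1 ∩ q.1).Nonempty ∧ (p.1 ∩ r.1).Nonempty ∧ (p.1 ∩ s.1).Nonempty ∧
     (q.1 ∩ r.1).Nonempty ∧ (q.1 ∩ s.1).Nonempty ∧ (r.1 ∩ s.1).Nonempty) →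
    (p.1 ∩ q.1 ∩ r.1 ∩ s.1).Nonempty := by decide

lemma fin5facts : ∀ i : Fin 5, i ≠ i+1 ∧ i ≠ i+2 ∧ i ≠ i+3 ∧ i ≠ i+4 ∧
    ({i,i+1} : Finset (Fin 5)) ≠ {i,i+2} ∧ ({i,i+1} : Finset (Fin 5)) ≠ {i,i+3} ∧
    ({i,i+1} : Finset (Fin 5)) ≠ {i,i+4} ∧ ({i,i+2} : Finset (Fin 5)) ≠ {i,i+3} ∧
    ({i,i+2} : Finset (Fin 5)) ≠ {i,i+4} ∧ ({i,i+3} : Finset (Fin 5)) ≠ {i,i+4} := by decide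

lemma fin5cases : ∀ i k : Fin 5, i ≠ k → k = i+1 ∨ k = i+2 ∨ k = i+3 ∨ k = i+4 := by decide

set_option maxRecDepth 8000 in
lemma disjpair : ∀ i k : Fin 5, i ≠ k → ∃ a b : Fin 5, i ≠ a ∧ k ≠ b ∧
    (({i,a} : Finset (Fin 5)) ∩ {k,b}) = ∅ := by decide

set_option maxRecDepth 8000 in
lemma fixperm : ∀ μ : Equiv.Perm (Fin 5), (∀ p : Finset (Fin 5), p.card = 2 → p.image ⇑μ = p) →
    ∀ i, μ i = i := by decide

/-- the permutation of `HessVert` induced by `σ`. -/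
def hphi (σ : Equiv.Perm (Fin 5)) : Equiv.Perm HessVert where
  toFun x := ⟨x.1.image σ, by
    rcases x.2 with h | h
    · exact Or.inl (by rw [Finset.card_image_of_injective _ σ.injective, h])
    · exact Or.inr (by rw [Finset.card_image_of_injective _ σ.injective, h])⟩
  invFun x := ⟨x.1.image σ.symm, by
    rcases x.2 with h | h
    · exact Or.inl (by rw [Finset.card_image_of_injective _ σ.symm.injective, h])
    · exact Or.inr (by rw [Finset.card_image_of_injective _ σ.symm.injective, h])⟩
  left_inv x := by
    apply Subtype.ext
    simp [Finset.image_image, Equiv.symm_comp_self]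
  right_inv x := by
    apply Subtype.ext
    simp [Finset.image_image, Equiv.self_comp_symm]

/-- the switch `α ↔ αᶜ`. -/
def hsw : Equiv.Perm HessVert where
  toFun x := ⟨x.1ᶜ, by
    rcases x.2 with h | h
    · exact Or.inr (by rw [Finset.card_compl, h]; rfl)
    · exact Or.inl (by rw [Finset.card_compl, h]; rfl)⟩
  invFun x := ⟨x.1ᶜ, by
    rcases x.2 with h | h
    · exact Or.inr (by rw [Finset.card_compl, h]; rfl)
    · exact Or.inl (by rw [Finset.card_compl, h]; rfl)⟩
  left_inv x := Subtype.ext (by simp)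
  right_inv x := Subtype.ext (by simp)

lemma hphi_apply (σ : Equiv.Perm (Fin 5)) (x : HessVert) : (hphi σ x).1 = x.1.image σ := rfl
lemma hsw_apply (x : HessVert) : (hsw x).1 = x.1ᶜ := rfl

lemma backward (g : Equiv.Perm HessVert) (σ : Equiv.Perm (Fin 5))
    (h : (∀ x, (g x).1 = x.1.image σ) ∨ (∀ x, (g x).1 = (x.1.image σ)ᶜ)) :
    ∀ x y, hessInc (g x) (g y) ↔ hessInc x y := by
  have key : ∀ s t : Finset (Fin 5), s.image σ ⊂ t.image σ ↔ s ⊂ t := by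
    intro s t
    rw [Finset.ssubset_iff_subset_ne, Finset.ssubset_iff_subset_ne,
      Finset.image_subset_image_iff σ.injective]
    constructor
    · rintro ⟨h1, h2⟩
      exact ⟨h1, fun hc => h2 (by rw [hc])⟩
    · rintro ⟨h1, h2⟩
      exact ⟨h1, fun hc => h2 (Finset.image_injective σ.injective hc)⟩
  rcases h with h | h
  · intro x y
    unfold hessInc
    rw [h x, h y, key, key]
  · intro x y
    unfold hessInc
    rw [h x, h y]
    simp only [Finset.compl_ssubset_compl, key]
    exact or_comm
def pr (i j : Fin 5) (h : i ≠ j) : HessVert := ⟨{i, j}, Or.inr (Finset.card_pair h)⟩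

lemma exists_sigma (g : Equiv.Perm HessVert)
    (hg : ∀ x y, hessInc (g x) (g y) ↔ hessInc x y)
    (hside : ∀ x, (g x).1.card = x.1.card) :
    ∃ σ : Equiv.Perm (Fin 5), ∀ x, (g x).1 = x.1.image ⇑σ := by
  have hNiff : ∀ p q, hessN (g p) (g q) ↔ hessN p q := by
    intro p q
    constructor
    · rintro ⟨z, h1, h2⟩
      refine ⟨g.symm z, ?_, ?_⟩
      · have h := hg p (g.symm z); rw [g.apply_symm_apply] at h; exact h.mp h1
      · have h := hg q (g.symm z); rw [g.apply_symm_apply] at h; exact h.mp h2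
    · rintro ⟨z, h1, h2⟩
      exact ⟨g z, (hg p z).mpr h1, (hg q z).mpr h2⟩
  have hcg : ∀ (k l : Fin 5) (h : k ≠ l), (g (pr k l h)).1.card = 2 := fun k l h => by
    rw [hside]; exact Finset.card_pair h
  have hInter : ∀ (i j k l : Fin 5) (hij : i ≠ j) (hkl : k ≠ l),
      (((g (pr i j hij)).1 ∩ (g (pr k l hkl)).1).Nonempty ↔
        (({i,j} : Finset (Fin 5)) ∩ {k,l}).Nonempty) := by
    intro i j k l hij hkl
    rw [← pairs_inter _ _ (hcg _ _ hij) (hcg _ _ hkl), hNiff,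
       pairs_inter _ _ (Finset.card_pair hij) (Finset.card_pair hkl)]
    exact Iff.rfl
  have common : ∀ i : Fin 5, ∃ j : Fin 5, ∀ (k : Fin 5) (h : i ≠ k), j ∈ (g (pr i k h)).1 := by
    intro i
    obtain ⟨h1, h2, h3, h4, d12, d13, d14, d23, d24, d34⟩ := fin5facts i
    have gne : ∀ (k l : Fin 5) (hk : i ≠ k) (hl : i ≠ l),
        ({i,k} : Finset (Fin 5)) ≠ {i,l} → (g (pr i k hk)).1 ≠ (g (pr i l hl)).1 := by
      intro k l hk hl hne hc
      exact hne (congrArg Subtype.val (g.injective (Subtype.ext hc)))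
    have inter : ∀ (k l : Fin 5) (hk : i ≠ k) (hl : i ≠ l),
        ((g (pr i k hk)).1 ∩ (g (pr i l hl)).1).Nonempty := by
      intro k l hk hl
      rw [hInter]
      exact ⟨i, Finset.mem_inter.mpr ⟨Finset.mem_insert_self _ _, Finset.mem_insert_self _ _⟩⟩
    obtain ⟨j, hj⟩ := clique4 ⟨_, hcg _ _ h1⟩ ⟨_, hcg _ _ h2⟩ ⟨_, hcg _ _ h3⟩ ⟨_, hcg _ _ h4⟩
      ⟨fun h => gne _ _ h1 h2 d12 (Subtype.mk_eq_mk.mp h),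
       fun h => gne _ _ h1 h3 d13 (Subtype.mk_eq_mk.mp h),
       fun h => gne _ _ h1 h4 d14 (Subtype.mk_eq_mk.mp h),
       fun h => gne _ _ h2 h3 d23 (Subtype.mk_eq_mk.mp h),
       fun h => gne _ _ h2 h4 d24 (Subtype.mk_eq_mk.mp h),
       fun h => gne _ _ h3 h4 d34 (Subtype.mk_eq_mk.mp h)⟩
      ⟨inter _ _ h1 h2, inter _ _ h1 h3, inter _ _ h1 h4,
       inter _ _ h2 h3, inter _ _ h2 h4, inter _ _ h3 h4⟩
    simp only [Finset.mem_inter] at hj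
    obtain ⟨⟨⟨m1, m2⟩, m3⟩, m4⟩ := hj
    refine ⟨j, fun k hk => ?_⟩
    rcases fin5cases i k hk with h | h | h | h <;> subst h
    · exact m1
    · exact m2
    · exact m3
    · exact m4
  choose σ₀ hσ₀ using common
  have inj : Function.Injective σ₀ := by
    intro i k hik
    by_contra hne
    obtain ⟨a, b, hia, hkb, hdisj⟩ := disjpair i k hne
    have m1 : σ₀ i ∈ (g (pr i a hia)).1 := hσ₀ i a hia
    have m2 : σ₀ k ∈ (g (pr k b hkb)).1 := hσ₀ k b hkb
    rw [← hik] at m2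
    have hn : ((g (pr i a hia)).1 ∩ (g (pr k b hkb)).1).Nonempty :=
      ⟨σ₀ i, Finset.mem_inter.mpr ⟨m1, m2⟩⟩
    rw [hInter, hdisj] at hn
    exact Finset.not_nonempty_empty hn
  have gpair : ∀ (x : HessVert), x.1.card = 2 → (g x).1 = x.1.image σ₀ := by
    intro x h2
    obtain ⟨i, k, hik, hx⟩ := Finset.card_eq_two.mp h2
    have hxd : x = pr i k hik := Subtype.ext hx
    subst hxd
    have m1 : σ₀ i ∈ (g (pr i k hik)).1 := hσ₀ i k hik
    have m2 : σ₀ k ∈ (g (pr i k hik)).1 := by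
      have hcomm : pr i k hik = pr k i (Ne.symm hik) := Subtype.ext (Finset.pair_comm i k)
      rw [hcomm]; exact hσ₀ k i (Ne.symm hik)
    have hsub : ({σ₀ i, σ₀ k} : Finset (Fin 5)) ⊆ (g (pr i k hik)).1 := by
      intro t ht
      rcases Finset.mem_insert.mp ht with rfl | ht
      · exact m1
      · rw [Finset.mem_singleton.mp ht]; exact m2
    have heq := Finset.eq_of_subset_of_card_le hsub
      (by rw [hcg _ _ hik, Finset.card_pair (fun h => hik (inj h))])
    show (g (pr i k hik)).1 = Finset.image σ₀ {i, k}
    rw [← heq, Finset.image_insert, Finset.image_singleton]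
  have pr_val : ∀ (a b : Fin 5) (h : a ≠ b), (pr a b h).1 = {a, b} := fun _ _ _ => rfl
  have gtriple : ∀ (x : HessVert), x.1.card = 3 → (g x).1 = x.1.image σ₀ := by
    intro x h3
    obtain ⟨i, j, k, hij, hik, hjk, hx⟩ := Finset.card_eq_three.mp h3
    have key : ∀ (a b : Fin 5) (hab : a ≠ b), a ∈ x.1 → b ∈ x.1 →
        σ₀ a ∈ (g x).1 ∧ σ₀ b ∈ (g x).1 := by
      intro a b hab ha hb
      have hss : (pr a b hab).1 ⊂ x.1 := by
        rw [pr_val, Finset.ssubset_iff_subset_ne]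
        refine ⟨?_, ?_⟩
        · intro t ht
          rcases Finset.mem_insert.mp ht with rfl | ht
          · exact ha
          · rw [Finset.mem_singleton.mp ht]; exact hb
        · intro hc
          rw [← hc, Finset.card_pair hab] at h3
          norm_num at h3
      have hinc : hessInc (g (pr a b hab)) (g x) := (hg _ _).mpr (Or.inl hss)
      have hsub : (g (pr a b hab)).1 ⊆ (g x).1 := by
        rcases hinc with h | h
        · exact h.subset
        · exfalso
          have hlt := Finset.card_lt_card h
          rw [hside, hside, h3, pr_val, Finset.card_pair hab] at hlt
          norm_num at hlt
      have himg : (g (pr a b hab)).1 = {σ₀ a, σ₀ b} := by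
        rw [gpair _ (by rw [pr_val]; exact Finset.card_pair hab), pr_val,
          Finset.image_insert, Finset.image_singleton]
      rw [himg] at hsub
      exact ⟨hsub (Finset.mem_insert_self _ _), hsub (by simp)⟩
    have hsub : x.1.image σ₀ ⊆ (g x).1 := by
      intro t ht
      obtain ⟨a, ha, rfl⟩ := Finset.mem_image.mp ht
      rw [hx] at ha
      have mi : i ∈ x.1 := by rw [hx]; simp
      have mj : j ∈ x.1 := by rw [hx]; simp
      have mk' : k ∈ x.1 := by rw [hx]; simp
      rcases Finset.mem_insert.mp ha with rfl | ha
      · exact (key a j hij mi mj).1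
      rcases Finset.mem_insert.mp ha with rfl | ha
      · exact (key i a hij mi mj).2
      rw [Finset.mem_singleton.mp ha]
      exact (key j k hjk mj mk').2
    have hcards : (g x).1.card ≤ (x.1.image σ₀).card := by
      rw [hside, Finset.card_image_of_injective _ inj]
    exact (Finset.eq_of_subset_of_card_le hsub hcards).symm
  refine ⟨Equiv.ofBijective σ₀ (Finite.injective_iff_bijective.mp inj), fun x => ?_⟩
  rcases x.2 with h | h
  · exact gtriple x h
  · exact gpair x h

lemma hsw_pres : ∀ x y, hessInc (hsw x) (hsw y) ↔ hessInc x y := by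
  intro x y
  unfold hessInc
  rw [hsw_apply, hsw_apply]
  simp only [Finset.compl_ssubset_compl]
  exact or_comm

lemma hswsw : hsw.trans hsw = Equiv.refl HessVert :=
  Equiv.ext fun x => Subtype.ext (by show ((hsw (hsw x))).1 = x.1; rw [hsw_apply, hsw_apply, compl_compl])

def hx₀ : HessVert := ⟨{0,1,2}, Or.inl (by decide)⟩

lemma hx₀c : hx₀.1.card = 3 := by decide

lemma forward (g : Equiv.Perm HessVert)
    (hg : ∀ x y, hessInc (g x) (g y) ↔ hessInc x y) :
    ∃ σ : Equiv.Perm (Fin 5),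
      (∀ x, (g x).1 = x.1.image ⇑σ) ∨ (∀ x, (g x).1 = (x.1.image ⇑σ)ᶜ) := by
  have hNmpr : ∀ (g' : Equiv.Perm HessVert),
      (∀ x y, hessInc (g' x) (g' y) ↔ hessInc x y) →
      ∀ x y, x.1.card = y.1.card → (g' x).1.card = (g' y).1.card := by
    intro g' hg' x y hxy
    obtain ⟨z, ⟨w1, hw1, hw1'⟩, ⟨w2, hw2, hw2'⟩⟩ := conn x y hxy
    have n1 : hessN (g' x) (g' z) := ⟨g' w1, (hg' x w1).mpr hw1, (hg' z w1).mpr hw1'⟩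
    have n2 : hessN (g' z) (g' y) := ⟨g' w2, (hg' z w2).mpr hw2, (hg' y w2).mpr hw2'⟩
    rw [sameCard _ _ n1]
    exact sameCard _ _ n2
  have hgsymm : ∀ x y, hessInc (g.symm x) (g.symm y) ↔ hessInc x y := by
    intro x y
    conv_rhs => rw [← g.apply_symm_apply x, ← g.apply_symm_apply y]
    exact (hg _ _).symm
  have hsymm23 : ∀ x : HessVert, x.1.card = 2 → (g x).1.card = (g hx₀).1.card → False := by
    intro x h2 hc
    have := hNmpr g.symm hgsymm (g x) (g hx₀) hc
    rw [g.symm_apply_apply, g.symm_apply_apply, h2, hx₀c] at this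
    norm_num at this
  rcases (g hx₀).2 with hg3 | hg2
  · -- side preserving
    have hside : ∀ x, (g x).1.card = x.1.card := by
      intro x
      rcases x.2 with h | h
      · rw [h, hNmpr g hg x hx₀ (by rw [h, hx₀c]), hg3]
      · rcases (g x).2 with h3 | h2
        · exact absurd (by rw [h3, hg3]) (fun hc => hsymm23 x h hc)
        · rw [h2, h]
    obtain ⟨σ, hσ⟩ := exists_sigma g hg hside
    exact ⟨σ, Or.inl hσ⟩
  · -- side swapping
    set g' := g.trans hsw with hg'def
    have hg' : ∀ x y, hessInc (g' x) (g' y) ↔ hessInc x y := by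
      intro x y
      exact (hsw_pres (g x) (g y)).trans (hg x y)
    have hside' : ∀ x, (g' x).1.card = x.1.card := by
      intro x
      have hc : (g' x).1.card = 5 - (g x).1.card := by
        show (hsw (g x)).1.card = _
        rw [hsw_apply, Finset.card_compl]
        rfl
      rcases x.2 with h | h
      · rw [hc, hNmpr g hg x hx₀ (by rw [h, hx₀c]), hg2, h]
      · rcases (g x).2 with h3 | h2
        · rw [hc, h3, h]
        · exact absurd (by rw [h2, hg2]) (fun hcc => hsymm23 x h hcc)
    obtain ⟨σ, hσ⟩ := exists_sigma g' hg' hside'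
    refine ⟨σ, Or.inr fun x => ?_⟩
    have h := hσ x
    show (g x).1 = _
    rw [← h]
    show _ = ((hsw (g x)).1)ᶜ
    rw [hsw_apply, compl_compl]

/-- the group of permutations of A ⊔ B preserving the incidence
structure has order 240, and consists exactly of the maps induced by a
permutation σ of {1,...,5}, possibly composed with the switch α ↔ ᾱ. -/
theorem stmt1 :
    Nat.card {g : Equiv.Perm HessVert // ∀ x y, hessInc (g x) (g y) ↔ hessInc x y} = 240 ∧
    {g : Equiv.Perm HessVert | ∀ x y, hessInc (g x) (g y) ↔ hessInc x y} =
      {g : Equiv.Perm HessVert | ∃ σ : Equiv.Perm (Fin 5),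
        (∀ x, (g x).1 = x.1.image σ) ∨ (∀ x, (g x).1 = (x.1.image σ)ᶜ)} := by
  constructor
  · let Ψ : Equiv.Perm (Fin 5) × Bool →
        {g : Equiv.Perm HessVert // ∀ x y, hessInc (g x) (g y) ↔ hessInc x y} :=
      fun p => ⟨if p.2 then (hphi p.1).trans hsw else hphi p.1, by
        rcases p with ⟨σ, b⟩
        cases b
        · simpa using backward (hphi σ) σ (Or.inl fun x => rfl)
        · simpa using backward ((hphi σ).trans hsw) σ (Or.inr fun x => by
            show ((hsw (hphi σ x))).1 = _
            rw [hsw_apply, hphi_apply])⟩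
    have phi_inj : ∀ σ σ' : Equiv.Perm (Fin 5), hphi σ = hphi σ' → σ = σ' := by
      intro σ σ' h
      have hall : ∀ p : Finset (Fin 5), p.card = 2 → p.image ⇑(σ.trans σ'.symm) = p := by
        intro p hp
        have hx := congrArg (fun e => ((e : Equiv.Perm HessVert) ⟨p, Or.inr hp⟩).1) h
        simp only [hphi_apply] at hx
        show p.image (⇑σ'.symm ∘ ⇑σ) = p
        rw [← Finset.image_image, hx, Finset.image_image]
        simp [Equiv.symm_comp_self]
      have hfix := fixperm _ hall
      ext i
      have h2 : σ'.symm (σ i) = i := hfix i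
      conv_rhs => rw [← h2, Equiv.apply_symm_apply]
    have hinj : Function.Injective Ψ := by
      rintro ⟨σ, b⟩ ⟨σ', b'⟩ h
      have hv := congrArg Subtype.val h
      simp only [Ψ] at hv
      have hcard : ∀ (σ₁ : Equiv.Perm (Fin 5)), (hphi σ₁ hx₀).1.card = 3 := fun σ₁ => by
        rw [hphi_apply, Finset.card_image_of_injective _ σ₁.injective]
        exact hx₀c
      have hcard2 : ∀ (σ₁ : Equiv.Perm (Fin 5)), (((hphi σ₁).trans hsw) hx₀).1.card = 2 :=
        fun σ₁ => by
        show (hsw (hphi σ₁ hx₀)).1.card = 2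
        rw [hsw_apply, Finset.card_compl, hcard σ₁]
        rfl
      cases b <;> cases b' <;> simp only [if_true, if_false, Bool.false_eq_true] at hv ⊢
      · rw [phi_inj _ _ hv]
      · exfalso
        have c1 := hcard σ
        rw [hv, hcard2 σ'] at c1
        norm_num at c1
      · exfalso
        have c1 := hcard σ'
        rw [← hv, hcard2 σ] at c1
        norm_num at c1
      · have : hphi σ = hphi σ' := by
          have := congrArg (fun e => Equiv.trans e hsw) hv
          simpa [Equiv.trans_assoc, hswsw] using this
        rw [phi_inj _ _ this]
    have hsurj : Function.Surjective Ψ := by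
      rintro ⟨g, hg⟩
      obtain ⟨σ, h | h⟩ := forward g hg
      · refine ⟨(σ, false), ?_⟩
        apply Subtype.ext
        apply Equiv.ext
        intro x
        apply Subtype.ext
        show (hphi σ x).1 = (g x).1
        rw [hphi_apply, h x]
      · refine ⟨(σ, true), ?_⟩
        apply Subtype.ext
        apply Equiv.ext
        intro x
        apply Subtype.ext
        show (hsw (hphi σ x)).1 = (g x).1
        rw [hsw_apply, hphi_apply, h x]
    rw [← Nat.card_eq_of_bijective Ψ ⟨hinj, hsurj⟩]
    simp only [Nat.card_eq_fintype_card, Fintype.card_prod, Fintype.card_perm,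
      Fintype.card_fin, Fintype.card_bool]
    rfl
  · ext g
    simp only [Set.mem_setOf_eq]
    exact ⟨fun hg => forward g hg, fun ⟨σ, h⟩ => backward g σ h⟩
end

section
/- Let D be a V_ℝ-chamber defined by a finite set F ⊂ V* \ {0} with pairwise distinct half-spaces H_f. Then f₀ ∈ F defines a wall of D if and only if there exists x ∈ V with f₀(x) < 0 and f(x) ≥ 0 for all f ∈ F \ {f₀}. -/
/-!
Fix an interior point `p` of the chamber, so that every `f ∈ F` is positive at `p`.
If `f₀` defines a wall, then each other `f ∈ F` is positive somewhere on the wall: otherwise `f`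
vanishes on an open piece of `ker f₀`, hence `f = c • f₀`, and `c ≤ 0` is excluded by `p` while
`c > 0` gives `H_f = H_{f₀}`. Summing these points gives a point of `ker f₀` where all other
forms are positive; moving it slightly in the direction `-p` makes `f₀` negative, and a rational
point nearby is the required `x`. Conversely, the segment from `p` to `x` crosses `ker f₀` at a
point where all other forms are positive, and near it `D ∩ ker f₀` is a neighbourhood in `ker f₀`.
-/

open Set Filter Topology

lemma exists_forall_pos_of_forall_exists_pos {M ι F : Type*} [AddCommMonoid M] [FunLike F M ℝ]
    [AddMonoidHomClass F M ℝ] {s : Finset ι} {ℓ : ι → F} {g : F}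
    (h : ∀ i ∈ s, ∃ y, g y = 0 ∧ (∀ j ∈ s, 0 ≤ ℓ j y) ∧ 0 < ℓ i y) :
    ∃ z, g z = 0 ∧ ∀ i ∈ s, 0 < ℓ i z := by
  choose! y hgy hnonneg hpos using h
  refine ⟨∑ i ∈ s, y i, by rw [map_sum, Finset.sum_eq_zero hgy], fun i hi => ?_⟩
  rw [map_sum]
  exact Finset.sum_pos' (fun j hj => hnonneg j hj i hi) ⟨i, hi, hpos i hi⟩

section TopologicalVectorSpace

variable {E : Type*} [AddCommGroup E] [TopologicalSpace E] [Module ℝ E]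
variable {ι : Type*} {F : Finset ι} {ℓ : ι → E →L[ℝ] ℝ} {p : E} {i₀ : ι}

def IsWall (D : Set E) (g : E →L[ℝ] ℝ) : Prop :=
  D ⊆ {x | 0 ≤ g x} ∧
    ∃ U : Set E, IsOpen U ∧ (U ∩ {x | g x = 0}).Nonempty ∧ U ∩ {x | g x = 0} ⊆ D

lemma isOpen_setOf_forall_pos : IsOpen {x | ∀ i ∈ F, 0 < ℓ i x} := by
  simp only [ofPred_forall]
  exact isOpen_biInter_finset fun i _ => isOpen_lt continuous_const (ℓ i).continuous

lemma isWall_of_exists_neg [DecidableEq ι] (hp : ∀ i ∈ F, 0 < ℓ i p) (hi₀ : i₀ ∈ F) {x : E}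
    (hx₀ : ℓ i₀ x < 0) (hx : ∀ i ∈ F, i ≠ i₀ → 0 ≤ ℓ i x) :
    IsWall {x | ∀ i ∈ F, 0 ≤ ℓ i x} (ℓ i₀) := by
  have hpi₀ := hp i₀ hi₀
  -- the point where the segment from `p` to `x` crosses `ker (ℓ i₀)`
  set z := -ℓ i₀ x • p + ℓ i₀ p • x
  refine ⟨fun y hy => hy i₀ hi₀, {y | ∀ i ∈ F.erase i₀, 0 < ℓ i y},
    isOpen_setOf_forall_pos, ⟨z, fun i hi => ?_, ?_⟩, ?_⟩
  · obtain ⟨hii₀, hiF⟩ := Finset.mem_erase.1 hi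
    have hpi := hp i hiF
    have hxi := hx i hiF hii₀
    simp only [z, map_add, map_smul, smul_eq_mul]
    nlinarith
  · simp only [z, mem_ofPred_eq, map_add, map_smul, smul_eq_mul]
    ring
  · rintro y ⟨hy, hy0 : ℓ i₀ y = 0⟩ i hi
    rcases eq_or_ne i i₀ with rfl | hii₀
    · exact hy0.ge
    · exact (hy i (Finset.mem_erase.2 ⟨hii₀, hi⟩)).le

variable [ContinuousAdd E] [ContinuousSMul ℝ E]

lemma IsOpen.exists_pos_add_smul_mem {U : Set E} (hU : IsOpen U) {z : E} (hz : z ∈ U) (w : E) :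
    ∃ t : ℝ, 0 < t ∧ z + t • w ∈ U := by
  have hlim : Tendsto (fun t : ℝ => z + t • w) (𝓝[>] 0) (𝓝 z) := by
    have : Continuous fun t : ℝ => z + t • w := by fun_prop
    simpa using (this.tendsto 0).mono_left nhdsWithin_le_nhds
  obtain ⟨t, htU, ht⟩ := ((hlim.eventually (hU.mem_nhds hz)).and self_mem_nhdsWithin).exists
  exact ⟨t, ht, htU⟩

lemma ContinuousLinearMap.pos_of_nonneg_on_isOpen {ℓ : E →L[ℝ] ℝ} (hℓ : ℓ ≠ 0) {U : Set E}
    (hU : IsOpen U) (hnonneg : ∀ y ∈ U, 0 ≤ ℓ y) {p : E} (hp : p ∈ U) : 0 < ℓ p := by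
  have hsub : ℓ '' U ⊆ interior (Ici 0) :=
    interior_maximal (image_subset_iff.2 hnonneg) (ℓ.isOpenMap_of_ne_zero hℓ U hU)
  simpa [interior_Ici] using hsub (mem_image_of_mem ℓ hp)

lemma exists_pos_on_ker_or_eq_mul {f g : E →L[ℝ] ℝ} {U : Set E} (hU : IsOpen U) {z : E}
    (hzU : z ∈ U) (hgz : g z = 0) (hf : ∀ y ∈ U, g y = 0 → 0 ≤ f y) :
    (∃ y ∈ U, g y = 0 ∧ 0 < f y) ∨ ∃ c : ℝ, ∀ x, f x = c * g x := by
  by_cases hker : LinearMap.ker (g : E →ₗ[ℝ] ℝ) ≤ LinearMap.ker (f : E →ₗ[ℝ] ℝ)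
  · right
    have hspan : (f : E →ₗ[ℝ] ℝ) ∈ Submodule.span ℝ (range fun _ : Unit => (g : E →ₗ[ℝ] ℝ)) :=
      mem_span_of_iInf_ker_le_ker (by simpa using hker)
    rw [range_const, Submodule.mem_span_singleton] at hspan
    obtain ⟨c, hc⟩ := hspan
    exact ⟨c, fun x => by simpa using (LinearMap.congr_fun hc x).symm⟩
  · left
    obtain ⟨w, hgw, hfw⟩ := SetLike.not_le_iff_exists.1 hker
    simp only [LinearMap.mem_ker, ContinuousLinearMap.coe_coe] at hgw hfw
    -- move from `z` along `f w • w ∈ ker g`, on which `f` is positive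
    obtain ⟨t, ht, htU⟩ := hU.exists_pos_add_smul_mem hzU (f w • w)
    refine ⟨_, htU, by simp [hgz, hgw], ?_⟩
    have hfz := hf z hzU hgz
    have hfw2 : 0 < f w * f w := mul_self_pos.2 hfw
    simp only [map_add, map_smul, smul_eq_mul]
    positivity

lemma exists_neg_forall_pos_of_mem_ker {g : E →L[ℝ] ℝ} {z : E} (hgz : g z = 0)
    (hz : ∀ i ∈ F, 0 < ℓ i z) (hgp : 0 < g p) : ∃ x, g x < 0 ∧ ∀ i ∈ F, 0 < ℓ i x := by
  obtain ⟨t, ht, htmem⟩ := isOpen_setOf_forall_pos.exists_pos_add_smul_mem hz (-p)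
  refine ⟨z + t • -p, ?_, htmem⟩
  simp only [map_add, map_smul, map_neg, hgz, smul_eq_mul]
  nlinarith

lemma IsWall.exists_ker_forall_pos [DecidableEq ι] (hwall : IsWall {x | ∀ i ∈ F, 0 ≤ ℓ i x} (ℓ i₀))
    (hp : ∀ i ∈ F, 0 < ℓ i p)
    (hdist : ∀ i ∈ F, ∀ j ∈ F, i ≠ j → {x | 0 ≤ ℓ i x} ≠ {x | 0 ≤ ℓ j x}) (hi₀ : i₀ ∈ F) :
    ∃ z, ℓ i₀ z = 0 ∧ ∀ i ∈ F.erase i₀, 0 < ℓ i z := by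
  obtain ⟨-, U, hU, ⟨z, hzU, hz⟩, hUD⟩ := hwall
  refine exists_forall_pos_of_forall_exists_pos fun i hi => ?_
  obtain ⟨hii₀, hiF⟩ := Finset.mem_erase.1 hi
  rcases exists_pos_on_ker_or_eq_mul hU hzU hz fun y hy hy0 => hUD ⟨hy, hy0⟩ i hiF with
    ⟨y, hyU, hy0, hpos⟩ | ⟨c, hc⟩
  · exact ⟨y, hy0, fun j hj => hUD ⟨hyU, hy0⟩ j (Finset.mem_of_mem_erase hj), hpos⟩
  rcases le_or_gt c 0 with hc0 | hc0
  · have hpi := hp i hiF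
    have hpi₀ := hp i₀ hi₀
    rw [hc] at hpi
    nlinarith
  · refine absurd ?_ (hdist i hiF i₀ hi₀ hii₀)
    ext x
    simp [hc, mul_nonneg_iff_of_pos_left hc0]

end TopologicalVectorSpace

def ratForm {n : ℕ} (f : Fin n → ℚ) : (Fin n → ℝ) →L[ℝ] ℝ :=
  ∑ i, (f i : ℝ) • ContinuousLinearMap.proj i

lemma ratForm_apply {n : ℕ} (f : Fin n → ℚ) (x : Fin n → ℝ) :
    ratForm f x = ∑ i, (f i : ℝ) * x i := by
  simp [ratForm]

lemma ratForm_ne_zero {n : ℕ} {f : Fin n → ℚ} (hf : f ≠ 0) : ratForm f ≠ 0 := by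
  obtain ⟨i, hi⟩ := Function.ne_iff.1 hf
  intro h
  have := congr($h (Pi.single i 1))
  simp [ratForm_apply, Pi.single_apply] at this
  exact hi this

/-- let D = ⋂_{f ∈ F} H_f be a V_ℝ-chamber defined by a finite set F of
nonzero rational linear forms with pairwise distinct half-spaces H_f.  Then f₀ ∈ F
defines a wall of D iff there exists a rational point x with f₀(x) < 0 and f(x) ≥ 0
for all f ∈ F \ {f₀}.  Linear forms are given by coefficient vectors in Fin n → ℚ,
evaluated on V_ℝ = Fin n → ℝ. -/
theorem stmt18 (n : ℕ) (F : Finset (Fin n → ℚ))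
    (hne : ∀ f ∈ F, f ≠ 0)
    (ev : (Fin n → ℚ) → (Fin n → ℝ) → ℝ)
    (hev : ∀ f x, ev f x = ∑ i, (f i : ℝ) * x i)
    (hdist : ∀ f ∈ F, ∀ f' ∈ F, f ≠ f' →
      {x : Fin n → ℝ | 0 ≤ ev f x} ≠ {x : Fin n → ℝ | 0 ≤ ev f' x})
    (D : Set (Fin n → ℝ))
    (hD : D = {x | ∀ f ∈ F, 0 ≤ ev f x})
    -- D is a chamber: it contains a nonempty open subset of V_ℝ
    (hchamber : ∃ U : Set (Fin n → ℝ), IsOpen U ∧ U.Nonempty ∧ U ⊆ D)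
    (f₀ : Fin n → ℚ) (hf₀ : f₀ ∈ F) :
    -- f₀ defines a wall of D: D ⊆ H_{f₀} and D ∩ [f₀]⊥ contains a nonempty
    -- relatively open subset of the hyperplane [f₀]⊥
    (D ⊆ {x | 0 ≤ ev f₀ x} ∧
      ∃ U : Set (Fin n → ℝ), IsOpen U ∧ (U ∩ {x | ev f₀ x = 0}).Nonempty ∧
        U ∩ {x | ev f₀ x = 0} ⊆ D) ↔
    ∃ x : Fin n → ℚ, ev f₀ (fun i => (x i : ℝ)) < 0 ∧
      ∀ f ∈ F, f ≠ f₀ → 0 ≤ ev f (fun i => (x i : ℝ)) := by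
  obtain rfl : ev = fun f => ⇑(ratForm f) := by
    funext f x
    rw [hev, ratForm_apply]
  subst hD
  obtain ⟨U, hU, ⟨p, hpU⟩, hUD⟩ := hchamber
  have hp : ∀ f ∈ F, 0 < ratForm f p := fun f hf =>
    ContinuousLinearMap.pos_of_nonneg_on_isOpen (ratForm_ne_zero (hne f hf)) hU
      (fun y hy => hUD hy f hf) hpU
  change IsWall _ (ratForm f₀) ↔ _
  refine ⟨fun hwall => ?_, fun ⟨x, hx₀, hx⟩ => isWall_of_exists_neg hp hf₀ hx₀ hx⟩
  obtain ⟨z, hz₀, hz⟩ := hwall.exists_ker_forall_pos hp hdist hf₀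
  obtain ⟨q, hq₀, hq⟩ := (DenseRange.piMap fun _ => Rat.denseRange_cast (𝕜 := ℝ)).exists_mem_open
    ((isOpen_lt (ratForm f₀).continuous continuous_const).inter isOpen_setOf_forall_pos)
    (exists_neg_forall_pos_of_mem_ker hz₀ hz (hp f₀ hf₀))
  exact ⟨q, hq₀, fun f hf hff₀ => (hq f (Finset.mem_erase.2 ⟨hff₀, hf⟩)).le⟩
end
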